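/- For all n, m ≥ 1, the following are equivalent: (1) every finite system of non-commutative polynomial equations with integer coefficients (in any number of variables) that is solvable in M_n(ℚ) is also solvable in M_m(ℚ); (2) n divides m. -/

import Mathlib

/-!
If `n ∣ m`, the block-diagonal embedding `M_n(ℚ) → M_m(ℚ)` is a unital ring homomorphism, so it
carries solutions to solutions. Conversely, the relations `e_ij e_kl = δ_jk e_il`, `∑ e_ii = 1`
of a full system of `n × n` matrix units are solvable in `M_n(ℚ)`. A solution in `M_m(ℚ)` consists
of `n` idempotents `e_ii`, all of the same trace since `e_ii = e_i1 e_1i` and `e_11 = e_1i e_i1`,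
which sum to `1`; as the trace of an idempotent is its rank, `m = n · rank e_11`.
-/

namespace FreeAlgebra

variable {A B : Type*} [Ring A] [Ring B] {α β : Type*}

theorem lift_comp_ringHom (f : A →+* B) (X : α → A) (p : FreeAlgebra ℤ α) :
    lift ℤ (f ∘ X) p = f (lift ℤ X p) := by
  have : lift ℤ (f ∘ X) = f.toIntAlgHom.comp (lift ℤ X) := by ext; simp
  rw [this]; rfl

theorem lift_lift_ι_comp (X : β → A) (e : α → β) (p : FreeAlgebra ℤ α) :
    lift ℤ X (lift ℤ (ι ℤ ∘ e) p) = lift ℤ (X ∘ e) p := by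
  rw [← AlgHom.comp_apply]
  congr 1
  ext; simp

end FreeAlgebra

open FreeAlgebra

def HasSolution (A : Type*) [Ring A] {α σ : Type*} (P : σ → FreeAlgebra ℤ α) : Prop :=
  ∃ X : α → A, ∀ j, lift ℤ X (P j) = 0

section HasSolution

variable {A B : Type*} [Ring A] [Ring B] {α β σ τ : Type*}

theorem HasSolution.map (f : A →+* B) {P : σ → FreeAlgebra ℤ α} (h : HasSolution A P) :
    HasSolution B P := by
  obtain ⟨X, hX⟩ := h
  exact ⟨f ∘ X, fun j => by rw [lift_comp_ringHom, hX, map_zero]⟩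

theorem hasSolution_rename_iff (e : α ≃ β) (e' : σ ≃ τ) (P : σ → FreeAlgebra ℤ α) :
    HasSolution A (fun j => lift ℤ (ι ℤ ∘ e) (P (e'.symm j))) ↔ HasSolution A P := by
  simp only [HasSolution, lift_lift_ι_comp]
  constructor
  · rintro ⟨X, hX⟩
    exact ⟨X ∘ e, fun j => by simpa using hX (e' j)⟩
  · rintro ⟨X, hX⟩
    exact ⟨X ∘ e.symm, fun j => by simpa [Function.comp_def] using hX (e'.symm j)⟩

theorem HasSolution.of_forall_fin
    (h : ∀ (k s : ℕ) (P : Fin s → FreeAlgebra ℤ (Fin k)), HasSolution A P → HasSolution B P)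
    [Finite α] [Finite σ] {P : σ → FreeAlgebra ℤ α} (hP : HasSolution A P) :
    HasSolution B P := by
  obtain ⟨k, ⟨e⟩⟩ := Finite.exists_equiv_fin α
  obtain ⟨s, ⟨e'⟩⟩ := Finite.exists_equiv_fin σ
  rw [← hasSolution_rename_iff e e'] at hP ⊢
  exact h k s _ hP

end HasSolution

section MatrixUnits

variable (n : Type*) [Fintype n] [DecidableEq n]

def matrixUnitRelations : Option ((n × n) × (n × n)) → FreeAlgebra ℤ (n × n)
  | none => ∑ i, ι ℤ (i, i) - 1
  | some ((i, j), (k, l)) => ι ℤ (i, j) * ι ℤ (k, l) - if j = k then ι ℤ (i, l) else 0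

variable {n}

theorem hasSolution_matrixUnitRelations_iff {A : Type*} [Ring A] :
    HasSolution A (matrixUnitRelations n) ↔ ∃ E : n → n → A,
      (∀ i j k l, E i j * E k l = if j = k then E i l else 0) ∧ ∑ i, E i i = 1 := by
  constructor
  · rintro ⟨X, hX⟩
    refine ⟨fun i j => X (i, j), fun i j k l => ?_, ?_⟩
    · have := hX (some ((i, j), (k, l)))
      simp only [matrixUnitRelations, map_sub, map_mul, lift_ι_apply, apply_ite (lift ℤ X),
        map_zero] at this
      exact sub_eq_zero.mp this
    · have := hX none
      simp only [matrixUnitRelations, map_sub, map_sum, lift_ι_apply, map_one] at this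
      exact sub_eq_zero.mp this
  · rintro ⟨E, hmul, hsum⟩
    refine ⟨fun p => E p.1 p.2, ?_⟩
    rintro (_ | ⟨⟨i, j⟩, ⟨k, l⟩⟩)
    · simp [matrixUnitRelations, hsum]
    · simp [matrixUnitRelations, apply_ite (lift ℤ _), hmul]

theorem hasSolution_matrixUnitRelations_matrix (R : Type*) [Ring R] :
    HasSolution (Matrix n n R) (matrixUnitRelations n) := by
  refine hasSolution_matrixUnitRelations_iff.mpr
    ⟨fun i j => Matrix.single i j 1, fun i j k l => ?_, Matrix.sum_single_one⟩
  split_ifs with h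
  · rw [h, Matrix.single_mul_single_same, one_mul]
  · exact Matrix.single_mul_single_of_ne (h := h) ..

theorem card_dvd_finrank_of_matrixUnits {K V : Type*} [Field K] [CharZero K] [AddCommGroup V]
    [Module K V] [FiniteDimensional K V] (E : n → n → Module.End K V)
    (hmul : ∀ i j k l, E i j * E k l = if j = k then E i l else 0) (hsum : ∑ i, E i i = 1) :
    Fintype.card n ∣ Module.finrank K V := by
  have htrace : (Module.finrank K V : K) = ∑ i, LinearMap.trace K V (E i i) := by
    rw [← map_sum, hsum, LinearMap.trace_one]
  cases isEmpty_or_nonempty n with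
  | inl _ => simp_all
  | inr h =>
    obtain ⟨i₀⟩ := h
    have hidem : IsIdempotentElem (E i₀ i₀) := (hmul i₀ i₀ i₀ i₀).trans (if_pos rfl)
    have hconj (i : n) : LinearMap.trace K V (E i i) = LinearMap.trace K V (E i₀ i₀) := by
      simpa [hmul] using LinearMap.trace_mul_comm K (E i i₀) (E i₀ i)
    rw [Finset.sum_congr rfl fun i _ => hconj i,
      (LinearMap.IsIdempotentElem.isProj_range _ hidem).trace, Finset.sum_const, Finset.card_univ,
      nsmul_eq_mul, ← Nat.cast_mul, Nat.cast_inj] at htrace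
    exact ⟨_, htrace⟩

end MatrixUnits

theorem Matrix.nonempty_ringHom_of_dvd (R : Type*) [Semiring R] {n m : ℕ} (h : n ∣ m) :
    Nonempty (Matrix (Fin n) (Fin n) R →+* Matrix (Fin m) (Fin m) R) := by
  obtain ⟨q, rfl⟩ := h
  exact ⟨(Matrix.reindexRingEquiv R finProdFinEquiv).toRingHom.comp
    ((Matrix.blockDiagonalRingHom (Fin n) (Fin q) R).comp (Pi.constRingHom (Fin q) _))⟩

theorem stmt8_general (n m : ℕ) :
    (∀ (k s : ℕ) (P : Fin s → FreeAlgebra ℤ (Fin k)),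
      (∃ X : Fin k → Matrix (Fin n) (Fin n) ℚ,
        ∀ j : Fin s, FreeAlgebra.lift ℤ X (P j) = 0) →
      (∃ Y : Fin k → Matrix (Fin m) (Fin m) ℚ,
        ∀ j : Fin s, FreeAlgebra.lift ℤ Y (P j) = 0))
    ↔ n ∣ m := by
  change (∀ k s P, HasSolution _ P → HasSolution _ P) ↔ _
  constructor
  · intro h
    have hEnd : HasSolution (Module.End ℚ (Fin m → ℚ)) (matrixUnitRelations (Fin n)) :=
      ((hasSolution_matrixUnitRelations_matrix ℚ).of_forall_fin h).map
        Matrix.toLinAlgEquiv'.toRingHom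
    obtain ⟨E, hmul, hsum⟩ := hasSolution_matrixUnitRelations_iff.mp hEnd
    simpa using card_dvd_finrank_of_matrixUnits E hmul hsum
  · rintro hdvd k s P hP
    obtain ⟨f⟩ := Matrix.nonempty_ringHom_of_dvd ℚ hdvd
    exact hP.map f

/-- For `n, m ≥ 1`: every finite system of non-commutative polynomial equations with
integer coefficients solvable in `M_n(ℚ)` is also solvable in `M_m(ℚ)` if and only if
`n ∣ m`. -/
theorem stmt8 (n m : ℕ) (hn : 1 ≤ n) (hm : 1 ≤ m) :
    (∀ (k s : ℕ) (P : Fin s → FreeAlgebra ℤ (Fin k)),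
      (∃ X : Fin k → Matrix (Fin n) (Fin n) ℚ,
        ∀ j : Fin s, FreeAlgebra.lift ℤ X (P j) = 0) →
      (∃ Y : Fin k → Matrix (Fin m) (Fin m) ℚ,
        ∀ j : Fin s, FreeAlgebra.lift ℤ Y (P j) = 0))
    ↔ n ∣ m :=
  stmt8_general n m
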